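/- For n ≥ 2, the number of early-hill-free Dyck n-paths ending in UD equals the number of hill-free Dyck (n−1)-paths, i.e., the Fine number F_{n−1}. -/
import Mathlib


inductive Step : Type
  | U : Step
  | D : Step
deriving DecidableEq

open Step

/-- The path stays weakly above ground level: every prefix has at least as many `U`s as `D`s. -/
def NonnegPrefixes (p : List Step) : Prop :=
  ∀ q : List Step, q <+: p → q.count D ≤ q.count U

/-- A Dyck path: equally many upsteps and downsteps, never dipping below ground level. -/
def IsDyck (p : List Step) : Prop :=
  p.count U = p.count D ∧ NonnegPrefixes p

/-- A Dyck `n`-path: a Dyck path with `n` upsteps (semilength `n`). -/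
def IsDyckN (n : ℕ) (p : List Step) : Prop :=
  IsDyck p ∧ p.count U = n

/-- Length of the terminal descent (maximal final run of downsteps). -/
def termDesc (p : List Step) : ℕ :=
  (p.reverse.takeWhile (fun s => s == D)).length

/-- Number of returns: downsteps that bring the path back to ground level. -/
def returnCount (p : List Step) : ℕ :=
  ((List.range p.length).filter
    (fun i => (p.take (i+1)).count U == (p.take (i+1)).count D)).length

/-- `GroundDescent p q m r` : `p = q ++ D^m ++ r` is a maximal run of `m ≥ 1` downsteps
ending at ground level. -/
def GroundDescent (p q : List Step) (m : ℕ) (r : List Step) : Prop :=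
  p = q ++ List.replicate m D ++ r ∧ 1 ≤ m ∧
  q.getLast? ≠ some D ∧ r.head? ≠ some D ∧
  q.count U = q.count D + m

/-- All descents to ground level other than the terminal one have odd length. -/
def OddNonterminalGroundDescents (p : List Step) : Prop :=
  ∀ q m r, GroundDescent p q m r → r ≠ [] → Odd m

/-- No occurrence of `UD` starting at ground level. -/
def HillFree (p : List Step) : Prop :=
  ∀ q r : List Step, p = q ++ [U, D] ++ r → q.count U ≠ q.count D

/-- No occurrence of `UDU` starting at ground level. -/
def EarlyHillFree (p : List Step) : Prop :=
  ∀ q r : List Step, p = q ++ [U, D, U] ++ r → q.count U ≠ q.count D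

/-- Number of early hills: occurrences of `UDU` starting at ground level. -/
def earlyHillCount (p : List Step) : ℕ :=
  ((List.range p.length).filter
    (fun i => decide ((p.take i).count U = (p.take i).count D ∧
      (p.drop i).take 3 = [U, D, U]))).length

lemma count_take_UD : ∀ j, (([U,D].take j).count D ≤ ([U,D].take j).count U)
  | 0 => by decide
  | 1 => by decide
  | (k+2) => by
    have h : [U,D].take (k+2) = [U,D] := by simp
    rw [h]; decide

lemma lemA (n : ℕ) (hn : 2 ≤ n) (q : List Step)
    (hq : IsDyckN (n-1) q ∧ HillFree q) :
    IsDyckN n (q ++ [U,D]) ∧ EarlyHillFree (q ++ [U,D]) ∧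
      ∃ r, q ++ [U,D] = r ++ [U,D] := by
  obtain ⟨⟨⟨hbal, hnn⟩, hcnt⟩, hhf⟩ := hq
  refine ⟨⟨⟨?_, ?_⟩, ?_⟩, ?_, ⟨q, rfl⟩⟩
  · simp [List.count_append, hbal]
  · intro t ht
    rw [List.prefix_iff_eq_take] at ht
    rw [ht, List.take_append]
    simp only [List.count_append]
    have h1 : (q.take t.length).count D ≤ (q.take t.length).count U :=
      hnn _ (List.take_prefix _ _)
    have h2 := count_take_UD (t.length - q.length)
    omega
  · simp only [List.count_append] at hbal ⊢
    simp [hcnt]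
    omega
  · intro a r heq hground
    rcases r.eq_nil_or_concat with rfl | ⟨r', x, rfl⟩
    · -- q ++ [U,D] = a ++ [U,D,U]
      have h1 : (q ++ [U]) ++ [D] = (a ++ [U,D]) ++ [U] := by
        simpa using heq
      have := (List.append_inj' h1 rfl).2
      simp at this
    · have h1 : (q ++ [U]) ++ [D] = (a ++ [U,D,U] ++ r') ++ [x] := by
        simpa using heq
      obtain ⟨h2, -⟩ := List.append_inj' h1 rfl
      rcases r'.eq_nil_or_concat with rfl | ⟨r'', y, rfl⟩
      · -- q ++ [U] = a ++ [U,D,U]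
        have h3 : q ++ [U] = (a ++ [U,D]) ++ [U] := by simpa using h2
        obtain ⟨h4, -⟩ := List.append_inj' h3 rfl
        exact hhf a [] (by simpa using h4) hground
      · have h3 : q ++ [U] = (a ++ [U,D,U] ++ r'') ++ [y] := by
          simpa using h2
        obtain ⟨h4, h5⟩ := List.append_inj' h3 rfl
        have h5' : y = U := by simpa using h5.symm
        subst h5'
        exact hhf a (U :: r'') (by rw [h4]; simp) hground

lemma lemB (n : ℕ) (hn : 2 ≤ n) (q : List Step)
    (hp : IsDyckN n (q ++ [U,D]) ∧ EarlyHillFree (q ++ [U,D]) ∧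
      ∃ r, q ++ [U,D] = r ++ [U,D]) :
    IsDyckN (n-1) q ∧ HillFree q := by
  obtain ⟨⟨⟨hbal, hnn⟩, hcnt⟩, hehf, -⟩ := hp
  simp only [List.count_append] at hbal hcnt
  have hqU : q.count U = n - 1 := by simp at hcnt ⊢; omega
  have hqbal : q.count U = q.count D := by simp at hbal hcnt; omega
  refine ⟨⟨⟨hqbal, ?_⟩, hqU⟩, ?_⟩
  · intro t ht; exact hnn t (ht.trans (List.prefix_append _ _))
  · intro a b heq hground
    cases b with
    | nil => exact hehf a [D] (by rw [heq]; simp) hground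
    | cons s b' =>
      cases s with
      | U => exact hehf a (b' ++ [U,D]) (by rw [heq]; simp) hground
      | D =>
        have hpre0 : a ++ [U,D,D] <+: q := ⟨b', by rw [heq]; simp⟩
        have hpre : a ++ [U,D,D] <+: q ++ [U,D] :=
          hpre0.trans (List.prefix_append _ _)
        have h := hnn _ hpre
        simp only [List.count_append] at h
        simp at h
        omega

/-- For `n ≥ 2`, early-hill-free Dyck `n`-paths ending in `UD` are equinumerous with
hill-free Dyck `(n-1)`-paths (counted by the Fine number `F_{n-1}`). -/
theorem stmt16 (n : ℕ) (hn : 2 ≤ n) :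
    Nat.card {p : List Step // IsDyckN n p ∧ EarlyHillFree p ∧
      ∃ q : List Step, p = q ++ [U, D]} =
    Nat.card {p : List Step // IsDyckN (n - 1) p ∧ HillFree p} := by
  refine (Nat.card_congr (Equiv.ofBijective
    (fun q : {p : List Step // IsDyckN (n - 1) p ∧ HillFree p} =>
      (⟨q.1 ++ [U,D], lemA n hn q.1 q.2⟩ :
        {p : List Step // IsDyckN n p ∧ EarlyHillFree p ∧
          ∃ q : List Step, p = q ++ [U, D]})) ⟨?_, ?_⟩)).symm
  · intro a b hab
    simp only [Subtype.mk.injEq] at hab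
    exact Subtype.ext (List.append_cancel_right hab)
  · rintro ⟨p, hP⟩
    obtain ⟨q, rfl⟩ := hP.2.2
    exact ⟨⟨q, lemB n hn q hP⟩, rfl⟩
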